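/- arXiv:1002.0536 — 4 statements merged into one kernel-verified Lean document; each statement's English description precedes it below -/
import Mathlib

section
/- Let H be a subgroup of index 2 in G, J₁, J₂ ≤ H, y ∈ G \ H, and P = {hJ₁ : h ∈ H} ∪ {yhJ₂ : h ∈ H}. Then gP = P for all g ∈ G if and only if J₁ = J₂. -/
/-!
If `P` is invariant, then `y • J₁ ∈ P`. It is not a coset `h • J₁` with `h ∈ H`, as those lie in
`H` and `y ∉ H`; so `J₁ = h • J₂`, which forces `h ∈ J₂` and `J₁ = J₂`. Conversely, for
`J₁ = J₂ = J` the family `P` consists of all left cosets of `J`, because `G = H ∪ y • H`.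
-/

open Pointwise

/-- The action of `g : G` on a family of subsets of `G` by left multiplication. -/
def smulFam {G : Type*} [Group G] (g : G) (P : Set (Set G)) : Set (Set G) :=
  (fun S => g • S) '' P

/-- The Type II family `{hJ₁ : h ∈ H} ∪ {yhJ₂ : h ∈ H}` of subsets of `G`. -/
def typeIIFam {G : Type*} [Group G] (H J₁ J₂ : Subgroup G) (y : G) : Set (Set G) :=
  {S : Set G | ∃ h ∈ H, S = h • (J₁ : Set G)} ∪
    {S : Set G | ∃ h ∈ H, S = (y * h) • (J₂ : Set G)}

section

variable {G : Type*} [Group G]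

theorem Subgroup.eq_of_coe_eq_smul {K L : Subgroup G} {a : G}
    (h : (K : Set G) = a • (L : Set G)) : K = L := by
  obtain ⟨l, hl, hal⟩ : (1 : G) ∈ a • (L : Set G) := h ▸ K.one_mem
  have ha : a ∈ L := eq_inv_of_mul_eq_one_left hal ▸ L.inv_mem hl
  exact SetLike.coe_injective (h.trans (smul_coe_set ha))

theorem smulFam_range_smul (g : G) (s : Set G) :
    smulFam g (Set.range fun x : G => x • s) = Set.range fun x : G => x • s := by
  rw [smulFam, ← Set.range_comp]
  simp only [Function.comp_def, smul_smul]
  exact (mul_left_surjective g).range_comp fun x => x • s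

theorem typeIIFam_self {H J : Subgroup G} {y : G} (hH : H.index = 2) (hy : y ∉ H) :
    typeIIFam H J J y = Set.range fun g : G => g • (J : Set G) := by
  ext S
  constructor
  · rintro (⟨h, -, rfl⟩ | ⟨h, -, rfl⟩) <;> exact ⟨_, rfl⟩
  · rintro ⟨g, rfl⟩
    by_cases hg : g ∈ H
    · exact Or.inl ⟨g, hg, rfl⟩
    · refine Or.inr ⟨y⁻¹ * g, ?_, by rw [mul_inv_cancel_left]⟩
      rw [Subgroup.mul_mem_iff_of_index_two hH, H.inv_mem_iff]
      exact iff_of_false hy hg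

theorem eq_of_smul_mem_typeIIFam {H J₁ J₂ : Subgroup G} {y : G} (hJ₁ : J₁ ≤ H) (hy : y ∉ H)
    (hmem : y • (J₁ : Set G) ∈ typeIIFam H J₁ J₂ y) : J₁ = J₂ := by
  rcases hmem with ⟨h, hh, heq⟩ | ⟨h, -, heq⟩
  · obtain ⟨j, hj, hjy⟩ : y ∈ h • (J₁ : Set G) := heq ▸ ⟨1, J₁.one_mem, mul_one y⟩
    exact absurd (hjy ▸ H.mul_mem hh (hJ₁ hj)) hy
  · rw [mul_smul] at heq
    exact Subgroup.eq_of_coe_eq_smul (smul_left_cancel y heq)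

end

theorem stmt_5_general {G : Type*} [Group G] (H J₁ J₂ : Subgroup G) (hH : H.index = 2)
    (hJ₁ : J₁ ≤ H) (y : G) (hy : y ∉ H) :
    (∀ g : G, smulFam g (typeIIFam H J₁ J₂ y) = typeIIFam H J₁ J₂ y) ↔ J₁ = J₂ := by
  constructor
  · intro hinv
    apply eq_of_smul_mem_typeIIFam hJ₁ hy
    rw [← hinv y]
    exact Set.mem_image_of_mem _ (Or.inl ⟨1, H.one_mem, (one_smul G _).symm⟩)
  · rintro rfl g
    rw [typeIIFam_self hH hy, smulFam_range_smul]

theorem stmt_5 {G : Type*} [Group G] (H J₁ J₂ : Subgroup G) (hH : H.index = 2)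
    (hJ₁ : J₁ ≤ H) (hJ₂ : J₂ ≤ H) (y : G) (hy : y ∉ H) :
    (∀ g : G, smulFam g (typeIIFam H J₁ J₂ y) = typeIIFam H J₁ J₂ y) ↔ J₁ = J₂ :=
  stmt_5_general H J₁ J₂ hH hJ₁ y hy
end

section
/- Let H be a subgroup of index 2 in a group G, J ≤ H, and r ∈ G \ H. The collection P = {h(J ∪ Jr) : h ∈ H} satisfies gP = P for all g ∈ G if and only if rJ = Jr and r² ∈ J. -/
open Pointwise

/-- The Type I family `{h(J ∪ Jr) : h ∈ H}` of subsets of `G`. -/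
def typeIFam {G : Type*} [Group G] (H : Subgroup G) (J : Set G) (r : G) : Set (Set G) :=
  {S : Set G | ∃ h ∈ H, S = h • (J ∪ J * ({r} : Set G))}

/-!
`P` is the orbit of `B = J ∪ Jr` under `H` acting on subsets of `G`. As `G = H ∪ Hr`, `P` is
`G`-stable iff `rB ∈ P`; and `rB = hB` with `h ∈ H` forces `h ∈ J` (since `h⁻¹r ∈ B \ H = Jr`),
so this means `rB = B`. Splitting along `H` and its complement, `B = J ∪ Jr` and
`rB = rJr ∪ rJ`, so `rB = B` iff `rJ = Jr` and `rJr = J`, the latter being `Jr² = J`.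
-/

open MulAction

theorem Set.eq_and_eq_of_union_eq_union {α : Type*} {A S S' T T' : Set α}
    (hS : S ⊆ A) (hS' : S' ⊆ A) (hT : Disjoint T A) (hT' : Disjoint T' A)
    (h : S ∪ T = S' ∪ T') : S = S' ∧ T = T' := by
  have inter_eq {S T : Set α} (hS : S ⊆ A) (hT : Disjoint T A) : (S ∪ T) ∩ A = S := by
    rw [Set.union_inter_distrib_right, Set.inter_eq_left.mpr hS,
      Set.disjoint_iff_inter_eq_empty.mp hT, Set.union_empty]
  have sdiff_eq {S T : Set α} (hS : S ⊆ A) (hT : Disjoint T A) : (S ∪ T) \ A = T := by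
    rw [Set.union_sdiff_distrib, Set.sdiff_eq_empty.mpr hS, hT.sdiff_eq_left, Set.empty_union]
  exact ⟨by rw [← inter_eq hS hT, h, inter_eq hS' hT'],
    by rw [← sdiff_eq hS hT, h, sdiff_eq hS' hT']⟩

section

variable {G : Type*} [Group G]

theorem Set.mem_mul_singleton_iff {s : Set G} {a x : G} : x ∈ s * {a} ↔ x * a⁻¹ ∈ s := by
  rw [Set.mul_singleton, Set.image_mul_right, Set.mem_preimage]

namespace Subgroup

variable {H J : Subgroup G} {s : Set G} {a : G}

theorem smul_orbit_eq_iff_of_index_two {α : Type*} [MulAction G α] (hH : H.index = 2)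
    {r : G} (hr : r ∉ H) (b : α) :
    (∀ g : G, g • orbit H b = orbit H b) ↔ r • b ∈ orbit H b := by
  refine ⟨fun h => h r ▸ Set.smul_mem_smul_set (mem_orbit_self b), fun hrb => ?_⟩
  obtain ⟨h, hh : (h : G) • b = r • b⟩ := hrb
  have mem_orbit (k : G) : k • b ∈ orbit H b := by
    by_cases hk : k ∈ H
    · exact ⟨⟨k, hk⟩, rfl⟩
    · refine ⟨⟨k * r⁻¹ * h, ?_⟩, ?_⟩
      · exact H.mul_mem ((mul_mem_iff_of_index_two hH).mpr
          (iff_of_false hk (H.inv_mem_iff.not.mpr hr))) h.2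
      · change (k * r⁻¹ * h) • b = k • b
        rw [mul_smul, hh, ← mul_smul, inv_mul_cancel_right]
  have smul_subset (g : G) : g • orbit H b ⊆ orbit H b := by
    rintro _ ⟨_, ⟨k, rfl⟩, rfl⟩
    change g • (k : G) • b ∈ _
    rw [smul_smul]
    exact mem_orbit _
  exact fun g => (smul_subset g).antisymm (Set.subset_smul_set_iff.mpr (smul_subset g⁻¹))

theorem disjoint_smul_of_notMem (ha : a ∉ H) (hs : s ⊆ H) : Disjoint (a • s) H := by
  rw [Set.disjoint_left]
  rintro _ ⟨x, hx, rfl⟩ hax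
  exact ha ((H.mul_mem_cancel_right (hs hx)).mp hax)

theorem disjoint_mul_singleton_of_notMem (ha : a ∉ H) (hs : s ⊆ H) : Disjoint (s * {a}) H := by
  rw [Set.disjoint_left]
  rintro _ ⟨x, hx, _, rfl, rfl⟩ hxa
  exact ha ((H.mul_mem_cancel_left (hs hx)).mp hxa)

theorem smul_mul_singleton_subset_of_index_two (hH : H.index = 2) (ha : a ∉ H) (hs : s ⊆ H) :
    a • s * {a} ⊆ H := by
  rintro _ ⟨_, ⟨x, hx, rfl⟩, _, rfl, rfl⟩
  refine (mul_mem_iff_of_index_two hH).mpr (iff_of_false (fun hax => ha ?_) ha)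
  exact (H.mul_mem_cancel_right (hs hx)).mp hax

theorem coe_mul_singleton_eq_self_iff : (J : Set G) * {a} = J ↔ a ∈ J := by
  refine ⟨fun h => ?_, subgroup_mul_singleton⟩
  rw [← SetLike.mem_coe, ← h, Set.mem_mul_singleton_iff, mul_inv_cancel]
  exact J.one_mem

theorem smul_union_mul_singleton_of_mem (ha : a ∈ J) (r : G) :
    a • ((J : Set G) ∪ J * {r}) = (J : Set G) ∪ J * {r} := by
  rw [Set.smul_set_union, ← smul_mul_assoc, smul_coe_set ha]

theorem smul_union_mul_singleton_mem_orbit_iff (hJ : J ≤ H) {r : G} (hr : r ∉ H) :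
    r • ((J : Set G) ∪ J * {r}) ∈ orbit H ((J : Set G) ∪ J * {r}) ↔
      r • ((J : Set G) ∪ J * {r}) = (J : Set G) ∪ J * {r} := by
  set B : Set G := (J : Set G) ∪ J * {r}
  refine ⟨fun ⟨h, hh⟩ => ?_, fun h => ⟨1, (one_smul G B).trans h.symm⟩⟩
  change (h : G) • B = r • B at hh
  have hr_mem : (h : G)⁻¹ * r ∈ B := by
    rw [← smul_eq_mul, ← Set.mem_smul_set_iff_inv_smul_mem, hh]
    exact ⟨1, Or.inl J.one_mem, mul_one r⟩
  have hh_inv : (h : G)⁻¹ ∈ J := by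
    rcases hr_mem with hJr | hJr
    · exact absurd ((H.mul_mem_cancel_left (H.inv_mem h.2)).mp (hJ hJr)) hr
    · simpa using Set.mem_mul_singleton_iff.mp hJr
  rw [← hh, smul_union_mul_singleton_of_mem (J.inv_mem_iff.mp hh_inv)]

theorem smul_union_mul_singleton_eq_self_iff (hH : H.index = 2) (hJ : J ≤ H) {r : G}
    (hr : r ∉ H) :
    r • ((J : Set G) ∪ J * {r}) = (J : Set G) ∪ J * {r} ↔
      r • (J : Set G) = J * {r} ∧ r ^ 2 ∈ J := by
  have hJH : (J : Set G) ⊆ H := hJ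
  rw [Set.smul_set_union, ← smul_mul_assoc, Set.union_comm (r • (J : Set G)),
    ← coe_mul_singleton_eq_self_iff]
  constructor
  · intro h
    obtain ⟨hrJr, hrJ⟩ := Set.eq_and_eq_of_union_eq_union
      (smul_mul_singleton_subset_of_index_two hH hr hJH) hJH
      (disjoint_smul_of_notMem hr hJH) (disjoint_mul_singleton_of_notMem hr hJH) h
    rw [hrJ, mul_assoc, Set.singleton_mul_singleton, ← sq] at hrJr
    exact ⟨hrJ, hrJr⟩
  · rintro ⟨hrJ, hr2⟩
    rw [hrJ, mul_assoc, Set.singleton_mul_singleton, ← sq, hr2]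

end Subgroup

theorem typeIFam_eq_orbit (H : Subgroup G) (S : Set G) (r : G) :
    typeIFam H S r = orbit H (S ∪ S * {r}) := by
  ext T
  constructor
  · rintro ⟨h, hh, rfl⟩
    exact ⟨⟨h, hh⟩, rfl⟩
  · rintro ⟨h, rfl⟩
    exact ⟨h, h.2, rfl⟩

end

theorem stmt_9 {G : Type*} [Group G] (H J : Subgroup G) (hH : H.index = 2)
    (hJ : J ≤ H) (r : G) (hr : r ∉ H) :
    (∀ g : G, smulFam g (typeIFam H (J : Set G) r) = typeIFam H (J : Set G) r) ↔
      (r • (J : Set G) = (J : Set G) * ({r} : Set G) ∧ r ^ 2 ∈ J) := by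
  simp only [smulFam, Set.image_smul, typeIFam_eq_orbit]
  rw [Subgroup.smul_orbit_eq_iff_of_index_two hH hr,
    Subgroup.smul_union_mul_singleton_mem_orbit_iff hJ hr,
    Subgroup.smul_union_mul_singleton_eq_self_iff hH hJ hr]
end

section
/- Let H be a subgroup of index 2 in G, J a normal subgroup of G contained in H, and r ∈ G \ H. Then the partition P = {h(J ∪ Jr) : h ∈ H} satisfies gP = P for all g ∈ G if and only if r² ∈ J. -/
open Pointwise

/-! The family `{hB : h ∈ H}` is `G`-stable iff every translate `gB` equals some `hB` with
`h ∈ H`. Modulo the normal subgroup `J`, the block `B = J ∪ Jr` is the preimage of `{1, r}`.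
If `r² ∈ J`, then `r` swaps `J` and `Jr`, so `rB = B`, and every `g ∉ H` is `(gr⁻¹)r` with
`gr⁻¹ ∈ H` because `[G : H] = 2`. Conversely `rB = hB` makes `k = h⁻¹r ∉ J` a stabiliser of `B`;
then `k = k • 1 ∈ B` forces `k ≡ r`, and `k² ∈ B` forces `r² ≡ 1`. -/

section

variable {G : Type*} [Group G]

theorem forall_smulFam_eq_iff (H : Subgroup G) (B : Set G) :
    (∀ g : G, smulFam g {S | ∃ h ∈ H, S = h • B} = {S | ∃ h ∈ H, S = h • B}) ↔
      ∀ g : G, ∃ h ∈ H, g • B = h • B := by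
  constructor
  · intro hP g
    have hgB : g • B ∈ {S | ∃ h ∈ H, S = h • B} :=
      hP g ▸ ⟨B, ⟨1, H.one_mem, (one_smul G B).symm⟩, rfl⟩
    exact hgB
  · intro hcover g
    ext S
    constructor
    · rintro ⟨_, ⟨h, -, rfl⟩, rfl⟩
      obtain ⟨h', hh', hgh⟩ := hcover (g * h)
      exact ⟨h', hh', (smul_smul g h B).trans hgh⟩
    · rintro ⟨h, -, rfl⟩
      obtain ⟨h', hh', hgh⟩ := hcover (g⁻¹ * h)
      exact ⟨h' • B, ⟨h', hh', rfl⟩, by simp only [← hgh, smul_smul, mul_inv_cancel_left]⟩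

variable {J : Subgroup G} [J.Normal]

theorem mem_union_mul_singleton_iff {r x : G} :
    x ∈ (J : Set G) ∪ (J : Set G) * {r} ↔ (x : G ⧸ J) = 1 ∨ (x : G ⧸ J) = r := by
  simp only [Set.mem_union, SetLike.mem_coe, Set.mul_singleton, Set.mem_image,
    QuotientGroup.eq_one_iff, QuotientGroup.eq_iff_div_mem]
  refine or_congr_right ⟨?_, fun hx => ⟨x / r, hx, div_mul_cancel x r⟩⟩
  rintro ⟨j, hj, rfl⟩
  simpa using hj

theorem smul_union_mul_singleton_self {r : G} (hr : r ^ 2 ∈ J) :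
    r • ((J : Set G) ∪ (J : Set G) * {r}) = (J : Set G) ∪ (J : Set G) * {r} := by
  have hr' : (r : G ⧸ J) ^ 2 = 1 := by rwa [← QuotientGroup.mk_pow, QuotientGroup.eq_one_iff]
  ext x
  rw [Set.mem_smul_set_iff_inv_smul_mem, mem_union_mul_singleton_iff, mem_union_mul_singleton_iff,
    smul_eq_mul, QuotientGroup.mk_mul, QuotientGroup.mk_inv, inv_mul_eq_one, inv_mul_eq_iff_eq_mul,
    ← sq, hr', or_comm]
  exact or_congr_right eq_comm

theorem sq_mem_of_smul_union_mul_singleton {r k : G} (hr : r ∉ J) (hk : k ∉ J)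
    (hkB : k • ((J : Set G) ∪ (J : Set G) * {r}) = (J : Set G) ∪ (J : Set G) * {r}) :
    r ^ 2 ∈ J := by
  have hmem : ∀ x ∈ (J : Set G) ∪ (J : Set G) * {r}, k * x ∈ (J : Set G) ∪ (J : Set G) * {r} :=
    fun x hx => hkB ▸ Set.smul_mem_smul_set hx
  have hkr : (k : G ⧸ J) = r := by
    have h1 := hmem 1 (mem_union_mul_singleton_iff.2 (Or.inl rfl))
    rw [mul_one, mem_union_mul_singleton_iff, QuotientGroup.eq_one_iff] at h1
    exact h1.resolve_left hk
  have hk2 := hmem k (mem_union_mul_singleton_iff.2 (Or.inr hkr))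
  rw [mem_union_mul_singleton_iff, QuotientGroup.mk_mul, hkr] at hk2
  rw [← QuotientGroup.eq_one_iff, QuotientGroup.mk_pow, sq]
  exact hk2.resolve_right fun hrr => hr ((QuotientGroup.eq_one_iff r).1 (mul_eq_left.1 hrr))

end

theorem stmt_11 {G : Type*} [Group G] (H J : Subgroup G) (hH : H.index = 2)
    (hJ : J ≤ H) (hJn : J.Normal) (r : G) (hr : r ∉ H) :
    (∀ g : G, smulFam g (typeIFam H (J : Set G) r) = typeIFam H (J : Set G) r) ↔
      r ^ 2 ∈ J := by
  rw [typeIFam, forall_smulFam_eq_iff]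
  constructor
  · intro hcover
    obtain ⟨h, hh, hrB⟩ := hcover r
    refine sq_mem_of_smul_union_mul_singleton (fun hrJ => hr (hJ hrJ)) (k := h⁻¹ * r)
      (fun hk => hr ?_) (by rw [mul_smul, hrB, inv_smul_smul])
    simpa using H.mul_mem hh (hJ hk)
  · intro hr2 g
    by_cases hg : g ∈ H
    · exact ⟨g, hg, rfl⟩
    · refine ⟨g * r⁻¹, (Subgroup.mul_mem_iff_of_index_two hH).2 (by simp [hg, hr]), ?_⟩
      nth_rw 2 [← smul_union_mul_singleton_self hr2]
      rw [smul_smul, inv_mul_cancel_right]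
end

section
/- Let H be a subgroup of index 2 in G and let J ≤ H satisfy N_G(J) = N_H(J). Let l, x ∈ H and r, y ∈ G \ H, and consider the partitions P^l(r) = {h(J^l ∪ J^l r) : h ∈ H} and P^x(y) = {h(J^x ∪ J^x y) : h ∈ H}, where the stabilizer in G of P^l(r) is H (i.e., the corresponding coloring is semiperfect). If P^x(y) is equivalent to P^l(r), i.e., P^x(y) = g • P^l(r) for some g ∈ G, then P^x(y) = P^l(r). -/
open Pointwise

/-- The conjugate `g⁻¹ S g` of a subset `S` of `G`. -/
def conjSet {G : Type*} [Group G] (g : G) (S : Set G) : Set G :=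
  (fun s => g⁻¹ * s * g) '' S

lemma mem_conjSet {G : Type*} [Group G] (g : G) (S : Set G) (a : G) :
    a ∈ conjSet g S ↔ g * a * g⁻¹ ∈ S := by
  constructor
  · rintro ⟨s, hs, rfl⟩
    have : g * (g⁻¹ * s * g) * g⁻¹ = s := by group
    rwa [this]
  · intro h
    exact ⟨g * a * g⁻¹, h, by group⟩

theorem stmt_16 {G : Type*} [Group G] (H J : Subgroup G) (hH : H.index = 2)
    (hJ : J ≤ H) (hN : Subgroup.normalizer (J : Set G) ≤ H) (l x : G) (hl : l ∈ H) (hx : x ∈ H)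
    (r y : G) (hr : r ∉ H) (hy : y ∉ H)
    (hstab : ∀ g : G,
      smulFam g (typeIFam H (conjSet l (J : Set G)) r) =
          typeIFam H (conjSet l (J : Set G)) r ↔ g ∈ H) :
    (∃ g : G,
        typeIFam H (conjSet x (J : Set G)) y =
          smulFam g (typeIFam H (conjSet l (J : Set G)) r)) →
      typeIFam H (conjSet x (J : Set G)) y =
        typeIFam H (conjSet l (J : Set G)) r := by
  rintro ⟨g, hg⟩
  suffices hgH : g ∈ H by rw [hg, (hstab g).mpr hgH]
  set Jl : Set G := conjSet l (J : Set G) with hJldef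
  set Jx : Set G := conjSet x (J : Set G) with hJxdef
  -- basic consequences of index 2: conjugation by anything preserves H
  have hconj : ∀ m u : G, m ∈ H → u⁻¹ * m * u ∈ H := by
    intro m u hm
    by_cases hu : u ∈ H
    · exact H.mul_mem (H.mul_mem (H.inv_mem hu) hm) hu
    · have h1 : u⁻¹ * m ∈ H ↔ (u⁻¹ ∈ H ↔ m ∈ H) := Subgroup.mul_mem_iff_of_index_two hH
      have h2 : (u⁻¹ * m) * u ∈ H ↔ ((u⁻¹ * m) ∈ H ↔ u ∈ H) :=
        Subgroup.mul_mem_iff_of_index_two hH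
      have hui : u⁻¹ ∉ H := fun h => hu (by simpa using H.inv_mem h)
      rw [h2, h1]
      tauto
  have hJl_sub : Jl ⊆ (H : Set G) := by
    rintro a ha
    rw [mem_conjSet] at ha
    have hmem : l * a * l⁻¹ ∈ H := hJ ha
    have heq : a = l⁻¹ * (l * a * l⁻¹) * l := by group
    rw [heq]
    exact H.mul_mem (H.mul_mem (H.inv_mem hl) hmem) hl
  have hJx_sub : Jx ⊆ (H : Set G) := by
    rintro a ha
    rw [mem_conjSet] at ha
    have hmem : x * a * x⁻¹ ∈ H := hJ ha
    have heq : a = x⁻¹ * (x * a * x⁻¹) * x := by group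
    rw [heq]
    exact H.mul_mem (H.mul_mem (H.inv_mem hx) hmem) hx
  -- Jl is closed under multiplication and inverse
  have hJl_mul : ∀ a b : G, a ∈ Jl → b ∈ Jl → a * b ∈ Jl := by
    intro a b ha hb
    rw [mem_conjSet] at ha hb ⊢
    have : l * (a * b) * l⁻¹ = (l * a * l⁻¹) * (l * b * l⁻¹) := by group
    rw [this]; exact J.mul_mem ha hb
  have hJl_inv : ∀ a : G, a ∈ Jl → a⁻¹ ∈ Jl := by
    intro a ha
    rw [mem_conjSet] at ha ⊢
    have : l * a⁻¹ * l⁻¹ = (l * a * l⁻¹)⁻¹ := by group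
    rw [this]; exact J.inv_mem ha
  have hlr : l * r ∉ H := fun h => hr (by
    have : r = l⁻¹ * (l * r) := by group
    rw [this]; exact H.mul_mem (H.inv_mem hl) h)
  -- the base set of the left family belongs to the family
  have hS0 : (Jx ∪ Jx * ({y} : Set G)) ∈ typeIFam H Jx y :=
    ⟨1, H.one_mem, (one_smul _ _).symm⟩
  rw [hg] at hS0
  obtain ⟨T, hT, hTeq⟩ := hS0
  obtain ⟨h, hhH, rfl⟩ := hT
  set c : G := g * h with hcdef
  have E : c • (Jl ∪ Jl * ({r} : Set G)) = Jx ∪ Jx * ({y} : Set G) := by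
    rw [hcdef, ← smul_smul]; exact hTeq
  have h1Jx : (1 : G) ∈ Jx := by
    rw [mem_conjSet]; simpa using J.one_mem
  have h1S0 : (1 : G) ∈ c • (Jl ∪ Jl * ({r} : Set G)) := by
    rw [E]; exact Or.inl h1Jx
  rw [Set.mem_smul_set_iff_inv_smul_mem] at h1S0
  have hc_inv : c⁻¹ ∈ Jl ∪ Jl * ({r} : Set G) := by simpa using h1S0
  rcases hc_inv with hcase | hcase
  · -- c⁻¹ ∈ Jl ⊆ H, so g ∈ H
    have hcH : c ∈ H := by
      have := hJl_sub hcase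
      simpa using H.inv_mem this
    have : g = c * h⁻¹ := by rw [hcdef]; group
    rw [this]; exact H.mul_mem hcH (H.inv_mem hhH)
  · -- c⁻¹ = j * r with j ∈ Jl ; derive a contradiction
    rw [Set.mul_singleton] at hcase
    obtain ⟨j, hjJl, hjr⟩ := hcase
    have hcval : c = r⁻¹ * j⁻¹ := by
      have : c⁻¹ = j * r := hjr.symm
      rw [← inv_inv c, this]; group
    have hjH : j ∈ H := hJl_sub hjJl
    -- key claim : Jx = conjSet (l*r) J
    have key : Jx = conjSet (l * r) (J : Set G) := by
      ext a
      constructor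
      · intro haJx
        have haH : a ∈ H := hJx_sub haJx
        have haS0 : a ∈ c • (Jl ∪ Jl * ({r} : Set G)) := by rw [E]; exact Or.inl haJx
        rw [Set.mem_smul_set_iff_inv_smul_mem] at haS0
        have : c⁻¹ * a ∈ Jl ∪ Jl * ({r} : Set G) := by simpa using haS0
        rcases this with hcase2 | hcase2
        · exfalso
          have hmem : j * r * a ∈ H := by
            have : c⁻¹ * a = j * r * a := by rw [hcval]; group
            rw [this] at hcase2
            exact hJl_sub hcase2
          have heq : r = j⁻¹ * (j * r * a) * a⁻¹ := by group
          apply hr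
          rw [heq]
          exact H.mul_mem (H.mul_mem (H.inv_mem hjH) hmem) (H.inv_mem haH)
        · rw [Set.mul_singleton] at hcase2
          obtain ⟨k, hkJl, hka⟩ := hcase2
          -- c⁻¹ * a = k * r, so a = j⁻¹ * k conjugated by r
          have ha_eq : a = r⁻¹ * (j⁻¹ * k) * r := by
            have h' : j * r * a = k * r := by
              have : c⁻¹ * a = j * r * a := by rw [hcval]; group
              rw [← this]; exact hka.symm
            have : a = (j * r)⁻¹ * (k * r) := by
              rw [← h']; group
            rw [this]; group
          have hjk : j⁻¹ * k ∈ Jl := hJl_mul _ _ (hJl_inv _ hjJl) hkJl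
          rw [mem_conjSet] at hjk ⊢
          have : l * r * a * (l * r)⁻¹ = l * (j⁻¹ * k) * l⁻¹ := by
            rw [ha_eq]; group
          rw [this]; exact hjk
      · intro halr
        rw [mem_conjSet] at halr
        -- let m := r * a * r⁻¹ ; then m ∈ Jl and a = r⁻¹ * m * r
        set m : G := r * a * r⁻¹ with hmdef
        have hmJl : m ∈ Jl := by
          rw [mem_conjSet]
          have : l * m * l⁻¹ = l * r * a * (l * r)⁻¹ := by rw [hmdef]; group
          rw [this]; exact halr
        have ha_eq : a = r⁻¹ * m * r := by rw [hmdef]; group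
        have haH : a ∈ H := by rw [ha_eq]; exact hconj m r (hJl_sub hmJl)
        have haS0 : a ∈ c • (Jl ∪ Jl * ({r} : Set G)) := by
          rw [Set.mem_smul_set_iff_inv_smul_mem]
          have hc_a : c⁻¹ * a = (j * m) * r := by
            rw [hcval, ha_eq]; group
          have : c⁻¹ • a = (j * m) * r := by simpa using hc_a
          rw [this]
          exact Or.inr ⟨j * m, hJl_mul _ _ hjJl hmJl, r, rfl, rfl⟩
        rw [E] at haS0
        rcases haS0 with h' | h'
        · exact h'
        · exfalso
          rw [Set.mul_singleton] at h'
          obtain ⟨k, hkJx, hka⟩ := h'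
          apply hy
          have : y = k⁻¹ * a := by rw [← hka]; group
          rw [this]
          exact H.mul_mem (H.inv_mem (hJx_sub hkJx)) haH
    -- now derive the contradiction with the normalizer hypothesis
    exfalso
    have hnorm : l * r * x⁻¹ ∈ Subgroup.normalizer (J : Set G) := by
      rw [Subgroup.mem_normalizer_iff]
      intro n
      have h1 : (x⁻¹ * n * x) ∈ Jx ↔ n ∈ J := by
        rw [mem_conjSet]
        constructor <;> intro hh
        · have : n = x * (x⁻¹ * n * x) * x⁻¹ := by group
          rwa [← this] at hh
        · have : x * (x⁻¹ * n * x) * x⁻¹ = n := by group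
          rwa [this]
      have h2 : (x⁻¹ * n * x) ∈ conjSet (l * r) (J : Set G) ↔
          (l * r * x⁻¹) * n * (l * r * x⁻¹)⁻¹ ∈ J := by
        rw [mem_conjSet]
        have : l * r * (x⁻¹ * n * x) * (l * r)⁻¹ =
            (l * r * x⁻¹) * n * (l * r * x⁻¹)⁻¹ := by group
        rw [this]
        exact Iff.rfl
      rw [← h1, key, h2]
    have hxH : l * r * x⁻¹ ∈ H := hN hnorm
    apply hlr
    have : l * r = (l * r * x⁻¹) * x := by group
    rw [this]
    exact H.mul_mem hxH hx
end
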